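/- arXiv:2207.13477 — 2 statements merged into one kernel-verified Lean document; each statement's English description precedes it below -/
import Mathlib

section
/- Define S_n^0 = 2/(2n+1) and recursively S_n^{r} = (1/(2n+1)) * (S_{n-1}^{r-1} + S_{n+1}^{r-1}) for r ≥ 1. Then for all integers r ≥ 0 and n ≥ r+1, S_n^r = 2^{r+1} / ∏_{j=1}^{r+1} (2n - 2r + 4j - 3). -/
/-- `S r n` is the sequence with `S 0 n = 2/(2n+1)` and
`S r n = (S (r-1) (n-1) + S (r-1) (n+1)) / (2n+1)`. -/
def S : ℕ → ℤ → ℚ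
  | 0, n => 2 / (2 * n + 1)
  | (r + 1), n => (S r (n - 1) + S r (n + 1)) / (2 * n + 1)

/-!
Write `D r n` for the denominator of the closed form. Splitting off its last factor, resp. its
first one, gives `D (r+1) n = D r (n-1) * (2n+2r+3) = (2n-2r-1) * D r (n+1)`, so
`1 / D r (n-1) + 1 / D r (n+1) = ((2n+2r+3) + (2n-2r-1)) / D (r+1) n = 2 (2n+1) / D (r+1) n`,
and the division by `2n+1` in the recursion cancels. All the factors involved are odd integers,
so no denominator ever vanishes.
-/

theorem Finset.prod_Icc_one_eq_prod_range {M : Type*} [CommMonoid M] (f : ℕ → M) (m : ℕ) :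
    ∏ j ∈ Finset.Icc 1 m, f j = ∏ k ∈ Finset.range m, f (k + 1) := by
  rw [← Finset.Ico_add_one_right_eq_Icc, Finset.prod_Ico_eq_prod_range, Nat.add_sub_cancel]
  simp only [add_comm]

theorem inv_add_inv_of_mul_eq_mul {K : Type*} [Field K] {a b c d : K} (habcd : a * b = c * d)
    (hab : a * b ≠ 0) : a⁻¹ + d⁻¹ = (b + c) / (a * b) := by
  have ha : a ≠ 0 := left_ne_zero_of_mul hab
  have hb : b ≠ 0 := right_ne_zero_of_mul hab
  have hd : d ≠ 0 := right_ne_zero_of_mul (habcd ▸ hab)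
  field_simp
  linear_combination habcd

def closedFormDenom (r : ℕ) (n : ℤ) : ℚ :=
  ∏ j ∈ Finset.Icc 1 (r + 1), ((2 * n - 2 * r + 4 * j - 3 : ℚ))

theorem closedFormDenom_eq_prod_range (r : ℕ) (n : ℤ) :
    closedFormDenom r n = ∏ k ∈ Finset.range (r + 1), ((2 * n - 2 * r + 4 * k + 1 : ℚ)) := by
  rw [closedFormDenom, Finset.prod_Icc_one_eq_prod_range]
  refine Finset.prod_congr rfl fun k _ => ?_
  push_cast
  ring

theorem closedFormDenom_succ_eq_mul_last (r : ℕ) (n : ℤ) :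
    closedFormDenom (r + 1) n = closedFormDenom r (n - 1) * (2 * n + 2 * r + 3 : ℚ) := by
  rw [closedFormDenom_eq_prod_range, closedFormDenom_eq_prod_range, Finset.prod_range_succ]
  refine congrArg₂ (· * ·) (Finset.prod_congr rfl fun k _ => ?_) ?_ <;>
  · push_cast
    ring

theorem closedFormDenom_succ_eq_first_mul (r : ℕ) (n : ℤ) :
    closedFormDenom (r + 1) n = (2 * n - 2 * r - 1 : ℚ) * closedFormDenom r (n + 1) := by
  rw [closedFormDenom_eq_prod_range, closedFormDenom_eq_prod_range, Finset.prod_range_succ']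
  refine (mul_comm _ _).trans (congrArg₂ (· * ·) ?_ (Finset.prod_congr rfl fun k _ => ?_)) <;>
  · push_cast
    ring

theorem closedFormDenom_ne_zero (r : ℕ) (n : ℤ) : closedFormDenom r n ≠ 0 := by
  refine Finset.prod_ne_zero_iff.mpr fun j _ => ?_
  have hodd : (2 * n - 2 * r + 4 * j - 3 : ℤ) ≠ 0 := by omega
  exact_mod_cast hodd

theorem S_closed_form_general (r : ℕ) (n : ℤ) :
    S r n = 2 ^ (r + 1) / ∏ j ∈ Finset.Icc 1 (r + 1), ((2 * n - 2 * r + 4 * j - 3 : ℚ)) := by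
  change S r n = 2 ^ (r + 1) / closedFormDenom r n
  induction r generalizing n with
  | zero =>
    rw [S, closedFormDenom, Finset.Icc_self, Finset.prod_singleton]
    push_cast
    ring
  | succ r ih =>
    have hsplit : closedFormDenom r (n - 1) * (2 * n + 2 * r + 3 : ℚ)
        = (2 * n - 2 * r - 1 : ℚ) * closedFormDenom r (n + 1) := by
      rw [← closedFormDenom_succ_eq_mul_last, closedFormDenom_succ_eq_first_mul]
    have hsum : (closedFormDenom r (n - 1))⁻¹ + (closedFormDenom r (n + 1))⁻¹
        = 2 * (2 * n + 1) / closedFormDenom (r + 1) n := by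
      have hD := closedFormDenom_ne_zero (r + 1) n
      rw [closedFormDenom_succ_eq_mul_last] at hD ⊢
      rw [inv_add_inv_of_mul_eq_mul hsplit hD]
      ring
    have hn : (2 * n + 1 : ℚ) ≠ 0 := by exact_mod_cast (by omega : 2 * n + 1 ≠ 0)
    calc S (r + 1) n
        = 2 ^ (r + 1) * ((closedFormDenom r (n - 1))⁻¹ + (closedFormDenom r (n + 1))⁻¹)
            / (2 * n + 1) := by rw [S, ih, ih]; ring
      _ = 2 ^ (r + 1) * (2 * (2 * n + 1) / closedFormDenom (r + 1) n) / (2 * n + 1) := by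
        rw [hsum]
      _ = 2 ^ (r + 1 + 1) / closedFormDenom (r + 1) n := by
        field_simp
        ring

theorem S_closed_form (r : ℕ) (n : ℤ) (hn : (r : ℤ) + 1 ≤ n) :
    S r n = 2 ^ (r + 1) / ∏ j ∈ Finset.Icc 1 (r + 1), ((2 * n - 2 * r + 4 * j - 3 : ℚ)) :=
  S_closed_form_general r n
end

section
/- For every integer n ≥ 1 and λ ≥ 1 real, and all x in [-1, 1], (1 - x^2)^{λ - 1/2} * |C_n^{(λ)}(x)| ≤ Γ(n/2 + λ) / (Γ(λ) * Γ(n/2 + 1)), where C_n^{(λ)} is the Gegenbauer (ultraspherical) polynomial of degree n with parameter λ. -/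
/-- The Gegenbauer (ultraspherical) polynomial `Cₙ^{(λ)}`, defined via the standard
three-term recurrence coming from the generating function
`(1 - 2xt + t²)^{-λ} = Σ Cₙ^{(λ)}(x) tⁿ`. -/
noncomputable def gegenbauer (lam : ℝ) : ℕ → ℝ → ℝ
  | 0 => fun _ => 1
  | 1 => fun x => 2 * lam * x
  | (n + 2) => fun x =>
      (2 * x * ((n : ℝ) + 1 + lam) * gegenbauer lam (n + 1) x
        - ((n : ℝ) + 2 * lam) * gegenbauer lam n x) / ((n : ℝ) + 2)

/-! The weighted function `w = (1 - x²) ^ (λ - 1/2) * C_n^{(λ)}` solves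
`(1 - x²) w'' + (2λ - 3) x w' + K w = 0` with `K = (n + 1)(n + 2λ - 1)`, so the energy
`E = w² + (1 - x²) w'² / K` has `E' = -4 (λ - 1) x w'² / K ≤ 0` on `[0, 1)`
(Sonine's argument).
Hence `w² ≤ E(0)`, and `E(0)` is explicit since `C_n` and `C_n'` at `0` are Gamma quotients.
For even `n` it equals the square of the right-hand side; for odd `n` the comparison is the
monotonicity of `Γ(y) Γ(y + 1) / Γ(y + 1/2)²`, which by the functional equation is a tail of the
product of the decreasing factors `(y + k + 1/2)² / ((y + k)(y + k + 1))`, and tends to `1` by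
log-convexity of `Γ`. Parity of `C_n` covers `x < 0`. -/

open Polynomial Set Filter Topology Real

noncomputable def gegenbauerPoly (l : ℝ) : ℕ → ℝ[X]
  | 0 => 1
  | 1 => C (2 * l) * X
  | (n + 2) => C ((n + 2 : ℝ)⁻¹) *
      (C (2 * (n + 1 + l)) * X * gegenbauerPoly l (n + 1) - C (n + 2 * l) * gegenbauerPoly l n)

section GegenbauerPoly

variable (l : ℝ)

theorem eval_gegenbauerPoly (n : ℕ) (x : ℝ) :
    (gegenbauerPoly l n).eval x = gegenbauer l n x := by
  induction n using Nat.twoStepInduction with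
  | zero => simp [gegenbauerPoly, gegenbauer]
  | one => simp [gegenbauerPoly, gegenbauer]
  | more n ih₀ ih₁ =>
    simp only [gegenbauerPoly, gegenbauer, eval_mul, eval_sub, eval_C, eval_X, ih₀, ih₁]
    field_simp

theorem eval_derivative_gegenbauerPoly_succ (n : ℕ) (x : ℝ) :
    (derivative (gegenbauerPoly l (n + 1))).eval x =
        x * (derivative (gegenbauerPoly l n)).eval x + (n + 2 * l) * (gegenbauerPoly l n).eval x ∧
      x * (derivative (gegenbauerPoly l (n + 1))).eval x =
        (derivative (gegenbauerPoly l n)).eval x + (n + 1) * (gegenbauerPoly l (n + 1)).eval x := by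
  induction n generalizing x with
  | zero => exact ⟨by simp [gegenbauerPoly], by simp [gegenbauerPoly]; ring⟩
  | succ n ih =>
    obtain ⟨h₁, h₂⟩ := ih x
    have hn : (n + 2 : ℝ) ≠ 0 := by positivity
    simp only [gegenbauerPoly, derivative_mul, derivative_C, derivative_X, derivative_sub, eval_mul,
      eval_add, eval_sub, eval_C, eval_X, zero_mul, zero_add, mul_one] at h₁ h₂ ⊢
    push_cast
    constructor
    · field_simp
      linear_combination (n + 2 * l) * h₂
    · field_simp
      linear_combination 2 * (n + 1 + l) * x * h₂ - (n + 2) * h₁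

theorem gegenbauerPoly_ode (n : ℕ) (x : ℝ) :
    (1 - x ^ 2) * (derivative (derivative (gegenbauerPoly l n))).eval x
      - (2 * l + 1) * x * (derivative (gegenbauerPoly l n)).eval x
      + n * (n + 2 * l) * (gegenbauerPoly l n).eval x = 0 := by
  have hderiv : (X ^ 2 - 1) * derivative (gegenbauerPoly l n) =
      C (n + 1 : ℝ) * gegenbauerPoly l (n + 1) - C (n + 2 * l) * (X * gegenbauerPoly l n) := by
    refine Polynomial.funext fun y => ?_
    obtain ⟨h₁, h₂⟩ := eval_derivative_gegenbauerPoly_succ l n y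
    simp only [eval_mul, eval_sub, eval_pow, eval_X, eval_one, eval_C]
    linear_combination h₂ - y * h₁
  have h := congrArg (fun p => (derivative p).eval x) hderiv
  simp only [derivative_mul, derivative_sub, derivative_X_pow, derivative_one, derivative_C,
    derivative_X, eval_add, eval_mul, eval_sub, eval_pow, eval_X, eval_one, eval_C,
    eval_zero] at h
  norm_num at h
  linear_combination -h - (n + 1) * (eval_derivative_gegenbauerPoly_succ l n x).1

theorem eval_derivative_gegenbauerPoly_zero (n : ℕ) :
    (derivative (gegenbauerPoly l n)).eval 0 = -((n + 1) * gegenbauer l (n + 1) 0) := by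
  have := (eval_derivative_gegenbauerPoly_succ l n 0).2
  rw [eval_gegenbauerPoly] at this
  linarith

end GegenbauerPoly

theorem gegenbauer_neg (l : ℝ) (n : ℕ) (x : ℝ) :
    gegenbauer l n (-x) = (-1) ^ n * gegenbauer l n x := by
  induction n using Nat.twoStepInduction with
  | zero => simp [gegenbauer]
  | one => simp [gegenbauer]
  | more n ih₀ ih₁ =>
    simp only [gegenbauer, ih₀, ih₁]
    ring

theorem gegenbauer_two_mul_add_one_zero (l : ℝ) (m : ℕ) : gegenbauer l (2 * m + 1) 0 = 0 := by
  have := gegenbauer_neg l (2 * m + 1) 0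
  rw [neg_zero, pow_succ, pow_mul] at this
  norm_num at this
  linarith

theorem gegenbauer_two_mul_zero (l : ℝ) (hl : 0 < l) (m : ℕ) :
    gegenbauer l (2 * m) 0 = (-1) ^ m * (Gamma (m + l) / (Gamma l * Gamma (m + 1))) := by
  induction m with
  | zero => simp [gegenbauer, (Gamma_pos_of_pos hl).ne']
  | succ m ih =>
    have hm : (2 * m + 2 : ℝ) ≠ 0 := by positivity
    rw [show 2 * (m + 1) = 2 * m + 2 by ring, gegenbauer]
    simp only [mul_zero, zero_mul, zero_sub]
    push_cast
    rw [Gamma_add_one (by positivity), show (m + 1 + l : ℝ) = (m + l) + 1 by ring,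
      Gamma_add_one (by positivity), ih]
    field_simp
    ring

theorem hasDerivAt_one_sub_sq (x : ℝ) : HasDerivAt (fun y : ℝ => 1 - y ^ 2) (-(2 * x)) x := by
  simpa using (hasDerivAt_pow 2 x).const_sub 1

section Weighted

variable {f f' : ℝ → ℝ} {a d x : ℝ}

theorem hasDerivAt_one_sub_sq_rpow_mul (hx : x ^ 2 < 1) (hf : HasDerivAt f d x) :
    HasDerivAt (fun y => (1 - y ^ 2) ^ a * f y)
      ((1 - x ^ 2) ^ a * d - 2 * a * ((1 - x ^ 2) ^ (a - 1) * (x * f x))) x := by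
  exact (((hasDerivAt_one_sub_sq x).rpow_const (Or.inl (by linarith))).fun_mul hf).congr_deriv
    (by ring)

theorem exists_hasDerivAt_weighted_ode {μ f'' : ℝ} (hx : x ^ 2 < 1) (hf : HasDerivAt f (f' x) x)
    (hf' : HasDerivAt f' f'' x) (hode : (1 - x ^ 2) * f'' - (2 * a + 2) * x * f' x + μ * f x = 0) :
    ∃ z, HasDerivAt
        (fun y => (1 - y ^ 2) ^ a * f' y - 2 * a * ((1 - y ^ 2) ^ (a - 1) * (y * f y))) z x ∧
      (1 - x ^ 2) * z
        + (2 * a - 2) * x * ((1 - x ^ 2) ^ a * f' x - 2 * a * ((1 - x ^ 2) ^ (a - 1) * (x * f x)))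
        + (μ + 2 * a) * ((1 - x ^ 2) ^ a * f x) = 0 := by
  refine ⟨_, (hasDerivAt_one_sub_sq_rpow_mul hx hf').sub
    ((hasDerivAt_one_sub_sq_rpow_mul hx ((hasDerivAt_id' x).fun_mul hf)).const_mul (2 * a)), ?_⟩
  have hs : 0 < 1 - x ^ 2 := by linarith
  have h₁ : (1 - x ^ 2) ^ (a - 1) = (1 - x ^ 2) ^ (a - 1 - 1) * (1 - x ^ 2) := by
    rw [← rpow_add_one hs.ne', sub_add_cancel]
  have h₀ : (1 - x ^ 2) ^ a = (1 - x ^ 2) ^ (a - 1 - 1) * (1 - x ^ 2) * (1 - x ^ 2) := by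
    rw [← h₁, ← rpow_add_one hs.ne', sub_add_cancel]
  rw [h₀, h₁]
  linear_combination (1 - x ^ 2) ^ (a - 1 - 1) * (1 - x ^ 2) * (1 - x ^ 2) * hode

end Weighted

theorem sq_le_of_ode {w w' : ℝ → ℝ} {c K x : ℝ} (hc : -1 ≤ c) (hK : 0 < K)
    (hw : ∀ y ∈ Ico (0 : ℝ) 1, HasDerivAt w (w' y) y)
    (hw' : ∀ y ∈ Ico (0 : ℝ) 1,
      ∃ z, HasDerivAt w' z y ∧ (1 - y ^ 2) * z + c * y * w' y + K * w y = 0)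
    (hx : x ∈ Ico (0 : ℝ) 1) :
    w x ^ 2 ≤ w 0 ^ 2 + w' 0 ^ 2 / K := by
  set E := fun y => w y ^ 2 + (1 - y ^ 2) * w' y ^ 2 / K
  have hE : ∀ y ∈ Ico (0 : ℝ) 1, HasDerivAt E (-(2 * (1 + c) * y * w' y ^ 2 / K)) y := by
    intro y hy
    obtain ⟨z, hz, hode⟩ := hw' y hy
    refine (((hw y hy).fun_pow 2).fun_add
      (((hasDerivAt_one_sub_sq y).fun_mul (hz.fun_pow 2)).div_const K)).congr_deriv ?_
    field_simp
    linear_combination 2 * w' y * hode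
  have hanti : AntitoneOn E (Ico 0 1) := by
    refine antitoneOn_of_hasDerivWithinAt_nonpos (convex_Ico 0 1)
      (fun y hy => (hE y hy).continuousAt.continuousWithinAt)
      (fun y hy => (hE y (interior_subset hy)).hasDerivWithinAt) fun y hy => ?_
    rw [interior_Ico] at hy
    have hy0 : 0 ≤ y := hy.1.le
    have hc' : 0 ≤ 1 + c := by linarith
    have : 0 ≤ 2 * (1 + c) * y * w' y ^ 2 / K := by positivity
    linarith
  have hx1 : 0 ≤ (1 - x ^ 2) * w' x ^ 2 / K := by
    have : 0 ≤ 1 - x ^ 2 := by nlinarith [hx.1, hx.2]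
    positivity
  calc w x ^ 2 ≤ E x := by simp only [E]; linarith
    _ ≤ E 0 := hanti ⟨le_rfl, zero_lt_one⟩ hx hx.1
    _ = w 0 ^ 2 + w' 0 ^ 2 / K := by simp [E]

theorem Real.Gamma_midpoint_sq_le {s t : ℝ} (hs : 0 < s) (ht : 0 < t) :
    Gamma ((s + t) / 2) ^ 2 ≤ Gamma s * Gamma t := by
  have h := Gamma_mul_add_mul_le_rpow_Gamma_mul_rpow_Gamma hs ht one_half_pos one_half_pos
    (add_halves 1)
  rw [← sqrt_eq_rpow, ← sqrt_eq_rpow, ← sqrt_mul (Gamma_pos_of_pos hs).le] at h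
  rw [show (s + t) / 2 = 1 / 2 * s + 1 / 2 * t by ring]
  calc _ ≤ √(Gamma s * Gamma t) ^ 2 := by gcongr
    _ = Gamma s * Gamma t := sq_sqrt (mul_pos (Gamma_pos_of_pos hs) (Gamma_pos_of_pos ht)).le

noncomputable def gammaMidRatio (y : ℝ) : ℝ := Gamma y * Gamma (y + 1) / Gamma (y + 1 / 2) ^ 2

namespace gammaMidRatio

theorem one_le {y : ℝ} (hy : 0 < y) : 1 ≤ gammaMidRatio y := by
  have h := Gamma_midpoint_sq_le hy (by linarith : 0 < y + 1)
  rw [show (y + (y + 1)) / 2 = y + 1 / 2 by ring] at h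
  rw [gammaMidRatio, one_le_div (pow_pos (Gamma_pos_of_pos (by linarith)) 2)]
  exact h

theorem le_one_add {y : ℝ} (hy : 0 < y) : gammaMidRatio y ≤ 1 + 1 / (2 * y) := by
  have h := Gamma_midpoint_sq_le (by linarith : 0 < y + 1 / 2) (by linarith : 0 < y + 3 / 2)
  rw [show (y + 1 / 2 + (y + 3 / 2)) / 2 = y + 1 by ring, show y + 3 / 2 = y + 1 / 2 + 1 by ring,
    Gamma_add_one (s := y + 1 / 2) (by linarith), Gamma_add_one hy.ne'] at h
  rw [gammaMidRatio, Gamma_add_one hy.ne',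
    div_le_iff₀ (pow_pos (Gamma_pos_of_pos (by linarith)) 2)]
  calc Gamma y * (y * Gamma y) = (y * Gamma y) ^ 2 / y := by field_simp
    _ ≤ Gamma (y + 1 / 2) * ((y + 1 / 2) * Gamma (y + 1 / 2)) / y := by gcongr
    _ = (1 + 1 / (2 * y)) * Gamma (y + 1 / 2) ^ 2 := by field_simp

theorem tendsto_atTop_nhds_one : Tendsto gammaMidRatio atTop (𝓝 1) := by
  have hlim : Tendsto (fun y : ℝ => 1 + 1 / (2 * y)) atTop (𝓝 1) := by
    have h2y : Tendsto (fun y : ℝ => 2 * y) atTop atTop := tendsto_id.const_mul_atTop two_pos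
    simpa using ((tendsto_const_nhds (x := (1 : ℝ))).div_atTop h2y).const_add 1
  refine tendsto_of_tendsto_of_tendsto_of_le_of_le' tendsto_const_nhds hlim ?_ ?_
  · filter_upwards [eventually_gt_atTop 0] with y hy using one_le hy
  · filter_upwards [eventually_gt_atTop 0] with y hy using le_one_add hy

theorem eq_mul_add_one {y : ℝ} (hy : 0 < y) :
    gammaMidRatio y = (y + 1 / 2) ^ 2 / (y * (y + 1)) * gammaMidRatio (y + 1) := by
  have hΓ := (Gamma_pos_of_pos (by linarith : 0 < y + 1 / 2)).ne'
  rw [gammaMidRatio, gammaMidRatio, Gamma_add_one (by positivity : y + 1 ≠ 0),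
    show y + 1 + 1 / 2 = y + 1 / 2 + 1 by ring, Gamma_add_one (s := y + 1 / 2) (by positivity),
    Gamma_add_one hy.ne']
  field_simp

theorem antitoneOn : AntitoneOn gammaMidRatio (Ioi 0) := by
  intro t (ht : 0 < t) a (ha : 0 < a) hta
  have hfactor {s b : ℝ} (hs : 0 < s) (hsb : s ≤ b) :
      (b + 1 / 2) ^ 2 / (b * (b + 1)) ≤ (s + 1 / 2) ^ 2 / (s * (s + 1)) := by
    have hb : 0 < b := hs.trans_le hsb
    rw [div_le_div_iff₀ (by positivity) (by positivity)]
    nlinarith [mul_le_mul hsb hsb hs.le (by linarith)]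
  set u : ℕ → ℝ := fun N => gammaMidRatio (a + N) / gammaMidRatio (t + N)
  have hu : Monotone u := by
    refine monotone_nat_of_le_succ fun N => ?_
    have haN : 0 < a + N := by positivity
    have htN : 0 < t + N := by positivity
    simp only [u, Nat.cast_succ, ← add_assoc]
    rw [eq_mul_add_one haN, eq_mul_add_one htN, mul_div_mul_comm]
    refine mul_le_of_le_one_left ?_ ((div_le_one (by positivity)).2 (hfactor htN (by linarith)))
    exact div_nonneg (by linarith [one_le (by linarith : 0 < a + N + 1)])
      (by linarith [one_le (by linarith : 0 < t + N + 1)])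
  have hlim : Tendsto u atTop (𝓝 1) := by
    have h (b : ℝ) : Tendsto (fun N : ℕ => gammaMidRatio (b + N)) atTop (𝓝 1) :=
      tendsto_atTop_nhds_one.comp (tendsto_atTop_add_const_left _ b tendsto_natCast_atTop_atTop)
    have := (h a).div (h t) one_ne_zero
    rwa [div_one] at this
  have := hu.ge_of_tendsto hlim 0
  simp only [u, CharP.cast_eq_zero, add_zero] at this
  rwa [div_le_one (by linarith [one_le ht])] at this

end gammaMidRatio

theorem gegenbauer_weighted_sq_le {l : ℝ} (hl : 1 ≤ l) (n : ℕ) {x : ℝ}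
    (hx : x ∈ Ico (0 : ℝ) 1) :
    ((1 - x ^ 2) ^ (l - 1 / 2) * gegenbauer l n x) ^ 2 ≤
      gegenbauer l n 0 ^ 2
        + ((n + 1) * gegenbauer l (n + 1) 0) ^ 2 / ((n + 1) * (n + 2 * l - 1)) := by
  set P := gegenbauerPoly l n
  have hK : (n + 1) * (n + 2 * l - 1) = n * (n + 2 * l) + 2 * (l - 1 / 2) := by ring
  have hsq {y : ℝ} (hy : y ∈ Ico (0 : ℝ) 1) : y ^ 2 < 1 := by nlinarith [hy.1, hy.2]
  have h := sq_le_of_ode (w := fun y => (1 - y ^ 2) ^ (l - 1 / 2) * P.eval y)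
    (c := 2 * (l - 1 / 2) - 2) (K := n * (n + 2 * l) + 2 * (l - 1 / 2)) (by linarith)
    (by nlinarith [n.cast_nonneg (α := ℝ)])
    (fun y hy => hasDerivAt_one_sub_sq_rpow_mul (hsq hy) (P.hasDerivAt y))
    (fun y hy => exists_hasDerivAt_weighted_ode (μ := n * (n + 2 * l)) (hsq hy) (P.hasDerivAt y)
      (P.derivative.hasDerivAt y) (by linear_combination gegenbauerPoly_ode l n y)) hx
  simp only [P, eval_gegenbauerPoly, eval_derivative_gegenbauerPoly_zero] at h
  norm_num at h
  rwa [hK]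

theorem gegenbauer_energy_zero_le {l : ℝ} (hl : 1 ≤ l) (n : ℕ) :
    gegenbauer l n 0 ^ 2
        + ((n + 1) * gegenbauer l (n + 1) 0) ^ 2 / ((n + 1) * (n + 2 * l - 1)) ≤
      (Gamma (n / 2 + l) / (Gamma l * Gamma (n / 2 + 1))) ^ 2 := by
  have hl0 : 0 < l := by linarith
  have hsign (k : ℕ) : ((-1 : ℝ) ^ k) ^ 2 = 1 := by
    rw [← pow_mul, pow_mul', neg_one_sq, one_pow]
  obtain ⟨m, rfl | rfl⟩ := n.even_or_odd'
  · rw [gegenbauer_two_mul_add_one_zero, gegenbauer_two_mul_zero l hl0]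
    push_cast
    rw [mul_div_cancel_left₀ _ two_ne_zero, mul_pow, hsign]
    simp
  · rw [gegenbauer_two_mul_add_one_zero, show 2 * m + 1 + 1 = 2 * (m + 1) by ring,
      gegenbauer_two_mul_zero l hl0]
    have key := gammaMidRatio.antitoneOn (by positivity : (0 : ℝ) < m + 1)
      (by positivity : (0 : ℝ) < m + l) (by linarith)
    set X := Gamma (m + l + 1 / 2) ^ 2 / (Gamma l ^ 2 * (Gamma (m + 1) * Gamma (m + 1 + 1)))
    have hX : 0 ≤ X := by positivity
    have h₁ : Gamma (m + l + 1) = (m + l) * Gamma (m + l) := Gamma_add_one (by positivity)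
    have h₂ : Gamma (m + 1 + 1) = (m + 1) * Gamma (m + 1) := Gamma_add_one (by positivity)
    calc _ = gammaMidRatio (m + l) * X := by
          simp only [gammaMidRatio, X]
          push_cast
          rw [show (m : ℝ) + 1 + l = m + l + 1 by ring, h₁, h₂, mul_pow, mul_pow, hsign,
            one_mul, show (2 * m + 1 + 2 * l - 1 : ℝ) = 2 * (m + l) by ring]
          field_simp
          ring
      _ ≤ gammaMidRatio (m + 1) * X := by gcongr
      _ = _ := by
          simp only [gammaMidRatio, X]
          push_cast
          rw [show (2 * m + 1 : ℝ) / 2 + l = m + l + 1 / 2 by ring,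
            show (2 * m + 1 : ℝ) / 2 + 1 = m + 1 + 1 / 2 by ring]
          field_simp

theorem durand_inequality_general (n : ℕ) (lam : ℝ) (hlam : 1 ≤ lam)
    (x : ℝ) (hx : x ∈ Set.Icc (-1 : ℝ) 1) :
    (1 - x ^ 2) ^ (lam - 1 / 2) * |gegenbauer lam n x|
      ≤ Real.Gamma ((n : ℝ) / 2 + lam) / (Real.Gamma lam * Real.Gamma ((n : ℝ) / 2 + 1)) := by
  wlog hx0 : 0 ≤ x generalizing x
  · have := this (-x) ⟨by linarith, by linarith [hx.1]⟩ (by linarith)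
    rwa [neg_sq, gegenbauer_neg, abs_mul, abs_pow, abs_neg, abs_one, one_pow, one_mul] at this
  have hB : 0 ≤ Gamma (n / 2 + lam) / (Gamma lam * Gamma (n / 2 + 1)) :=
    div_nonneg (Gamma_pos_of_pos (by positivity)).le
      (mul_pos (Gamma_pos_of_pos (by linarith)) (Gamma_pos_of_pos (by positivity))).le
  rcases hx.2.eq_or_lt with rfl | hx1
  · rwa [one_pow, sub_self, zero_rpow (by linarith), zero_mul]
  · have h := sq_le_sq.mp
      ((gegenbauer_weighted_sq_le hlam n ⟨hx0, hx1⟩).trans (gegenbauer_energy_zero_le hlam n))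
    rwa [abs_mul, abs_of_nonneg (rpow_nonneg (by nlinarith) _), abs_of_nonneg hB] at h

theorem durand_inequality (n : ℕ) (hn : 1 ≤ n) (lam : ℝ) (hlam : 1 ≤ lam)
    (x : ℝ) (hx : x ∈ Set.Icc (-1 : ℝ) 1) :
    (1 - x ^ 2) ^ (lam - 1 / 2) * |gegenbauer lam n x|
      ≤ Real.Gamma ((n : ℝ) / 2 + lam) / (Real.Gamma lam * Real.Gamma ((n : ℝ) / 2 + 1)) :=
  durand_inequality_general n lam hlam x hx
end
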